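/- arXiv:1902.04952 — 2 statements merged into one kernel-verified Lean document; each statement's English description precedes it below -/
import Mathlib

section
/- Let F : ℝ^d → ℝ be twice continuously differentiable with a minimizer w*, and suppose its Hessian ∇²F is L-Lipschitz in spectral norm: ‖∇²F(w) − ∇²F(w′)‖₂ ≤ L‖w − w′‖₂ for all w, w′. Fix an iterate w_t, let H_t = ∇²F(w_t) be symmetric positive definite with condition number κ_t = σ_max(H_t)/σ_min(H_t), and let ε ∈ (0, 1/4). Suppose a symmetric positive definite matrix H̃_t satisfies (1−ε)H_t ⪯ H̃_t ⪯ (1+ε)H_t and set w_{t+1} = w_t − H̃_t⁻¹ ∇F(w_t). Then ‖w_{t+1} − w*‖₂ ≤ √2·ε·√κ_t·‖w_t − w*‖₂ + (L/σ_min(H_t))·‖w_t − w*‖₂². -/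
open Matrix

noncomputable section

/-- The smallest eigenvalue of a Hermitian matrix. -/
def sMin {d : ℕ} {H : Matrix (Fin d) (Fin d) ℝ} (hH : H.IsHermitian) : ℝ :=
  ⨅ i, hH.eigenvalues i

/-- The largest eigenvalue of a Hermitian matrix. -/
def sMax {d : ℕ} {H : Matrix (Fin d) (Fin d) ℝ} (hH : H.IsHermitian) : ℝ :=
  ⨆ i, hH.eigenvalues i

/-! Write `Δ = w_t - w*`, `H = H_t` and `g = ∇F(w_t)`. Since `∇F(w*) = 0`, the Lipschitz Hessian
gives the Taylor bound `‖g - HΔ‖ ≤ (L/2)‖Δ‖²`. The error of the step splits as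
`w_{t+1} - w* = u - v` with `u = Δ - H̃⁻¹HΔ` and `v = H̃⁻¹(g - HΔ)`.

The first term solves `H̃u = (H̃ - H)Δ`. The spectral approximation says
`|⟪x, (H̃ - H)x⟫| ≤ ε⟪x, Hx⟫`, hence (Cauchy–Schwarz for the form of `H̃ - H` relative to `H`)
`(1-ε)‖u‖²_H ≤ ⟪u, H̃u⟫ = ⟪u, (H̃ - H)Δ⟫ ≤ ε‖u‖_H‖Δ‖_H`. Comparing the energy norm with the
Euclidean one through the extreme eigenvalues gives `‖u‖ ≤ ε/(1-ε) · √κ · ‖Δ‖ ≤ √2 ε √κ ‖Δ‖`.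
The second term is controlled by the coercivity `⟪x, H̃x⟫ ≥ (1-ε)σ_min‖x‖²`:
`‖v‖ ≤ ‖g - HΔ‖/((1-ε)σ_min) ≤ (L/σ_min)‖Δ‖²`. -/

open RealInnerProductSpace

namespace Matrix

variable {n : Type*} [Fintype n] [DecidableEq n]

theorem IsHermitian.posSemidef_smul_add_smul_one {A : Matrix n n ℝ} (hA : A.IsHermitian)
    {a b : ℝ} (h : ∀ i, 0 ≤ a * hA.eigenvalues i + b) : (a • A + b • 1).PosSemidef := by
  have hconj : a • A + b • 1 = Unitary.conjStarAlgAut ℝ _ hA.eigenvectorUnitary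
      (diagonal fun i => a * hA.eigenvalues i + b) := by
    conv_lhs => rw [hA.spectral_theorem]
    rw [← map_smul, ← map_one (Unitary.conjStarAlgAut ℝ _ hA.eigenvectorUnitary), ← map_smul,
      ← map_add]
    congr 1
    ext i j
    by_cases hij : i = j <;> simp [hij]
  rw [hconj, Unitary.conjStarAlgAut_apply,
    Unitary.isUnit_coe.posSemidef_star_right_conjugate_iff, posSemidef_diagonal_iff]
  exact h

theorem PosSemidef.inner_toEuclideanLin_le {A B : Matrix n n ℝ} (h : (B - A).PosSemidef)
    (x : EuclideanSpace ℝ n) : ⟪x, toEuclideanLin A x⟫ ≤ ⟪x, toEuclideanLin B x⟫ := by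
  have := (isPositive_toEuclideanLin_iff.mpr h).inner_nonneg_right x
  rwa [map_sub, LinearMap.sub_apply, inner_sub_right, sub_nonneg] at this

end Matrix

section ExtremeEigenvalues

variable {d : ℕ} {H : Matrix (Fin d) (Fin d) ℝ}

theorem sMin_le_eigenvalues (hH : H.IsHermitian) (i : Fin d) : sMin hH ≤ hH.eigenvalues i :=
  ciInf_le (Set.finite_range _).bddBelow i

theorem eigenvalues_le_sMax (hH : H.IsHermitian) (i : Fin d) : hH.eigenvalues i ≤ sMax hH :=
  le_ciSup (Set.finite_range _).bddAbove i

theorem sMin_pos [Nonempty (Fin d)] (hH : H.PosDef) : 0 < sMin hH.1 := by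
  obtain ⟨i, hi⟩ := Finite.exists_min hH.1.eigenvalues
  exact (hH.eigenvalues_pos i).trans_le (le_ciInf hi)

theorem sMin_mul_norm_sq_le_inner (hH : H.IsHermitian) (x : EuclideanSpace ℝ (Fin d)) :
    sMin hH * ‖x‖ ^ 2 ≤ ⟪x, toEuclideanLin H x⟫ := by
  have hpsd : ((1 : ℝ) • H + (-sMin hH) • 1).PosSemidef :=
    hH.posSemidef_smul_add_smul_one fun i => by linarith [sMin_le_eigenvalues hH i]
  have := PosSemidef.inner_toEuclideanLin_le (A := sMin hH • 1) (B := H)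
    (by simpa [sub_eq_add_neg] using hpsd) x
  simpa [real_inner_smul_right, real_inner_self_eq_norm_sq] using this

theorem inner_le_sMax_mul_norm_sq (hH : H.IsHermitian) (x : EuclideanSpace ℝ (Fin d)) :
    ⟪x, toEuclideanLin H x⟫ ≤ sMax hH * ‖x‖ ^ 2 := by
  have hpsd : ((-1 : ℝ) • H + sMax hH • 1).PosSemidef :=
    hH.posSemidef_smul_add_smul_one fun i => by linarith [eigenvalues_le_sMax hH i]
  have := PosSemidef.inner_toEuclideanLin_le (A := H) (B := sMax hH • 1)
    (by simpa [sub_eq_add_neg, add_comm] using hpsd) x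
  simpa [real_inner_smul_right, real_inner_self_eq_norm_sq] using this

end ExtremeEigenvalues

section InnerProductSpace

variable {E : Type*} [NormedAddCommGroup E] [InnerProductSpace ℝ E]

theorem LinearMap.IsSymmetric.two_mul_inner_le_of_abs_inner_self_le {A B : E →ₗ[ℝ] E}
    (hB : B.IsSymmetric) {ε : ℝ} (hBA : ∀ x, |⟪x, B x⟫| ≤ ε * ⟪x, A x⟫) (x y : E) :
    2 * ⟪x, B y⟫ ≤ ε * (⟪x, A x⟫ + ⟪y, A y⟫) := by
  have hsymm : ⟪y, B x⟫ = ⟪x, B y⟫ := by rw [← hB y x, real_inner_comm]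
  have hpolar : ⟪x + y, B (x + y)⟫ - ⟪x - y, B (x - y)⟫ = 4 * ⟪x, B y⟫ := by
    simp only [map_add, map_sub, inner_add_left, inner_add_right, inner_sub_left,
      inner_sub_right, hsymm]
    ring
  have hparallel : ⟪x + y, A (x + y)⟫ + ⟪x - y, A (x - y)⟫ = 2 * (⟪x, A x⟫ + ⟪y, A y⟫) := by
    simp only [map_add, map_sub, inner_add_left, inner_add_right, inner_sub_left,
      inner_sub_right]
    ring
  have hplus := (abs_le.mp (hBA (x + y))).2
  have hminus := (abs_le.mp (hBA (x - y))).1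
  linear_combination (hplus + hminus) / 2 - hpolar / 2 + ε * hparallel / 2

theorem LinearMap.IsSymmetric.inner_le_of_abs_inner_self_le {A B : E →ₗ[ℝ] E}
    (hA : ∀ x, x ≠ 0 → 0 < ⟪x, A x⟫) (hB : B.IsSymmetric) {ε : ℝ} (hε : 0 ≤ ε)
    (hBA : ∀ x, |⟪x, B x⟫| ≤ ε * ⟪x, A x⟫) (x y : E) :
    ⟪x, B y⟫ ≤ ε * √⟪x, A x⟫ * √⟪y, A y⟫ := by
  rcases eq_or_ne x 0 with rfl | hx
  · simp only [inner_zero_left]; positivity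
  rcases eq_or_ne y 0 with rfl | hy
  · simp only [map_zero, inner_zero_right]; positivity
  set a := √⟪x, A x⟫
  set b := √⟪y, A y⟫
  have ha : 0 < a := Real.sqrt_pos.mpr (hA x hx)
  have hb : 0 < b := Real.sqrt_pos.mpr (hA y hy)
  have ha2 : a ^ 2 = ⟪x, A x⟫ := Real.sq_sqrt (hA x hx).le
  have hb2 : b ^ 2 = ⟪y, A y⟫ := Real.sq_sqrt (hA y hy).le
  -- rescaling to `b • x` and `a • y` makes both quadratic terms equal to `a²b²`
  have h := hB.two_mul_inner_le_of_abs_inner_self_le hBA (b • x) (a • y)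
  simp only [map_smul, real_inner_smul_left, real_inner_smul_right, ← ha2, ← hb2] at h
  have : a * b * ⟪x, B y⟫ ≤ a * b * (ε * a * b) := by nlinarith
  exact le_of_mul_le_mul_left this (mul_pos ha hb)

theorem norm_le_div_of_apply_eq {T : E →ₗ[ℝ] E} {c : ℝ} (hc : 0 < c)
    (hT : ∀ x, c * ‖x‖ ^ 2 ≤ ⟪x, T x⟫) {v r : E} (hv : T v = r) : ‖v‖ ≤ ‖r‖ / c := by
  rw [le_div_iff₀ hc]
  rcases (norm_nonneg v).eq_or_lt with hv0 | hv0
  · rw [← hv0, zero_mul]; exact norm_nonneg r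
  have : c * ‖v‖ ^ 2 ≤ ‖v‖ * ‖r‖ := hv ▸ (hT v).trans (real_inner_le_norm v (T v))
  nlinarith

theorem sqrt_inner_le_of_apply_eq_sub {H H' : E →ₗ[ℝ] E} (hHpos : ∀ x, x ≠ 0 → 0 < ⟪x, H x⟫)
    (hH : H.IsSymmetric) (hH' : H'.IsSymmetric) {ε : ℝ} (hε : 0 ≤ ε)
    (hlow : ∀ x, (1 - ε) * ⟪x, H x⟫ ≤ ⟪x, H' x⟫) (hup : ∀ x, ⟪x, H' x⟫ ≤ (1 + ε) * ⟪x, H x⟫)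
    {u Δ : E} (hu : H' u = H' Δ - H Δ) :
    (1 - ε) * √⟪u, H u⟫ ≤ ε * √⟪Δ, H Δ⟫ := by
  have hdiff : ∀ x, |⟪x, (H' - H) x⟫| ≤ ε * ⟪x, H x⟫ := fun x => by
    rw [LinearMap.sub_apply, inner_sub_right, abs_le]
    constructor <;> linarith [hlow x, hup x]
  have hcs := (hH'.sub hH).inner_le_of_abs_inner_self_le hHpos hε hdiff u Δ
  rw [LinearMap.sub_apply, ← hu] at hcs
  have hQu : 0 ≤ ⟪u, H u⟫ := by
    rcases eq_or_ne u 0 with rfl | hu0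
    · simp
    · exact (hHpos u hu0).le
  set p := √⟪u, H u⟫
  have hp : 0 ≤ p := Real.sqrt_nonneg _
  have hp2 : p ^ 2 = ⟪u, H u⟫ := Real.sq_sqrt hQu
  have : p * ((1 - ε) * p) ≤ p * (ε * √⟪Δ, H Δ⟫) := by nlinarith [hlow u]
  rcases hp.eq_or_lt with hp0 | hp0
  · rw [← hp0, mul_zero]; positivity
  · exact le_of_mul_le_mul_left this hp0

theorem norm_sub_apply_le_of_spectral_approx {H H' G : E →ₗ[ℝ] E} (hH : H.IsSymmetric)
    (hH' : H'.IsSymmetric) {m M ε : ℝ} (hm : 0 < m) (hmH : ∀ x, m * ‖x‖ ^ 2 ≤ ⟪x, H x⟫)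
    (hHM : ∀ x, ⟪x, H x⟫ ≤ M * ‖x‖ ^ 2) (hε : 0 ≤ ε) (hε1 : ε < 1)
    (hlow : ∀ x, (1 - ε) * ⟪x, H x⟫ ≤ ⟪x, H' x⟫) (hup : ∀ x, ⟪x, H' x⟫ ≤ (1 + ε) * ⟪x, H x⟫)
    (hG : ∀ x, H' (G x) = x) (Δ g : E) :
    ‖Δ - G g‖ ≤ ε / (1 - ε) * √(M / m) * ‖Δ‖ + ‖g - H Δ‖ / ((1 - ε) * m) := by
  set u := Δ - G (H Δ)
  set v := G (g - H Δ)
  have hsplit : Δ - G g = u - v := by simp only [u, v, map_sub]; abel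
  have hu : H' u = H' Δ - H Δ := by simp only [u, map_sub, hG]
  have hHpos : ∀ x, x ≠ 0 → 0 < ⟪x, H x⟫ := fun x hx =>
    (mul_pos hm (by positivity)).trans_le (hmH x)
  have henergy := sqrt_inner_le_of_apply_eq_sub hHpos hH hH' hε hlow hup hu
  have hu_low : √m * ‖u‖ ≤ √⟪u, H u⟫ := by
    rw [← Real.sqrt_sq (norm_nonneg u), ← Real.sqrt_mul hm.le]
    exact Real.sqrt_le_sqrt (hmH u)
  have hΔ_up : √⟪Δ, H Δ⟫ ≤ √M * ‖Δ‖ := by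
    rw [← Real.sqrt_sq (norm_nonneg Δ), ← Real.sqrt_mul' M (sq_nonneg _)]
    exact Real.sqrt_le_sqrt (hHM Δ)
  have hu_norm : ‖u‖ ≤ ε / (1 - ε) * √(M / m) * ‖Δ‖ := by
    have h1ε : 0 < 1 - ε := by linarith
    have hsm : 0 < √m := Real.sqrt_pos.mpr hm
    have hchain : (1 - ε) * (√m * ‖u‖) ≤ ε * (√M * ‖Δ‖) :=
      calc (1 - ε) * (√m * ‖u‖) ≤ (1 - ε) * √⟪u, H u⟫ := by gcongr
        _ ≤ ε * √⟪Δ, H Δ⟫ := henergy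
        _ ≤ ε * (√M * ‖Δ‖) := by gcongr
    rw [Real.sqrt_div' M hm.le,
      show ε / (1 - ε) * (√M / √m) * ‖Δ‖ = ε * (√M * ‖Δ‖) / ((1 - ε) * √m) by field_simp,
      le_div_iff₀ (by positivity)]
    linarith
  have hv_norm : ‖v‖ ≤ ‖g - H Δ‖ / ((1 - ε) * m) :=
    norm_le_div_of_apply_eq (mul_pos (by linarith) hm)
      (fun x => by nlinarith [hmH x, hlow x]) (hG _)
  calc ‖Δ - G g‖ = ‖u - v‖ := by rw [hsplit]
    _ ≤ ‖u‖ + ‖v‖ := norm_sub_le u v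
    _ ≤ _ := add_le_add hu_norm hv_norm

theorem ContDiff.differentiable_gradient [CompleteSpace E] {F : E → ℝ} (hF : ContDiff ℝ 2 F) :
    Differentiable ℝ (gradient F) :=
  ((InnerProductSpace.toDual ℝ E).symm.contDiff.comp
    (hF.fderiv_right (by norm_num))).differentiable one_ne_zero

end InnerProductSpace

theorem norm_sub_sub_fderiv_apply_le {E F : Type*} [NormedAddCommGroup E] [NormedSpace ℝ E]
    [NormedAddCommGroup F] [NormedSpace ℝ F] {f : E → F} {f' : E → E →L[ℝ] F} {L : ℝ}
    (hf : ∀ x, HasFDerivAt f (f' x) x)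
    (hL : ∀ x y v, ‖f' x v - f' y v‖ ≤ L * ‖x - y‖ * ‖v‖) (x y : E) :
    ‖f x - f y - f' x (x - y)‖ ≤ L / 2 * ‖x - y‖ ^ 2 := by
  set h := x - y
  let φ : ℝ → F := fun s => f (y + s • h) - f y - s • f' x h
  have hφ : ∀ s, HasDerivAt φ (f' (y + s • h) h - f' x h) s := fun s => by
    have hline : HasDerivAt (fun s : ℝ => y + s • h) h s := by
      simpa using ((hasDerivAt_id s).smul_const h).const_add y
    have := (((hf _).comp_hasDerivAt s hline).sub_const (f y)).sub
      ((hasDerivAt_id s).smul_const (f' x h))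
    rwa [one_smul] at this
  have hB : ∀ s, HasDerivAt (fun s : ℝ => L * ‖h‖ ^ 2 * (s - s ^ 2 / 2))
      (L * ‖h‖ ^ 2 * (1 - s)) s := fun s => by
    simpa using (((hasDerivAt_id s).sub ((hasDerivAt_pow 2 s).div_const 2)).const_mul
      (L * ‖h‖ ^ 2))
  have hbound : ∀ s ∈ Set.Ico (0 : ℝ) 1,
      ‖f' (y + s • h) h - f' x h‖ ≤ L * ‖h‖ ^ 2 * (1 - s) := by
    intro s hs
    have hdist : ‖y + s • h - x‖ = (1 - s) * ‖h‖ := by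
      rw [show y + s • h - x = (s - 1) • h by simp only [h, sub_smul, one_smul]; abel,
        norm_smul, Real.norm_of_nonpos (by linarith [hs.2])]
      ring
    calc ‖f' (y + s • h) h - f' x h‖ ≤ L * ‖y + s • h - x‖ * ‖h‖ := hL _ _ _
      _ = L * ‖h‖ ^ 2 * (1 - s) := by rw [hdist]; ring
  have key := image_norm_le_of_norm_deriv_right_le_deriv_boundary
    (fun s _ => (hφ s).continuousAt.continuousWithinAt) (fun s _ => (hφ s).hasDerivWithinAt)
    (by simp [φ]) hB hbound (Set.right_mem_Icc.mpr zero_le_one)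
  convert key using 1
  · simp [φ, h]
  · ring

theorem div_one_sub_le_sqrt_two_mul {ε : ℝ} (hε : 0 ≤ ε) (hε' : ε ≤ 1 / 4) :
    ε / (1 - ε) ≤ √2 * ε := by
  have h43 : 4 / 3 ≤ √2 := Real.le_sqrt_of_sq_le (by norm_num)
  have := mul_le_mul_of_nonneg_right h43 (mul_nonneg hε (by linarith : (0 : ℝ) ≤ 1 - ε))
  rw [div_le_iff₀ (by linarith)]
  nlinarith

theorem div_one_sub_mul_le_div {ε m r c : ℝ} (hε : ε ≤ 1 / 2) (hm : 0 < m) (hr : 0 ≤ r)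
    (hrc : r ≤ c / 2) : r / ((1 - ε) * m) ≤ c / m := by
  have hrc' : r ≤ c * (1 - ε) := by nlinarith
  rw [div_le_div_iff₀ (mul_pos (by linarith) hm) hm]
  nlinarith [mul_le_mul_of_nonneg_right hrc' hm.le]

/-- local convergence of one subsampled-Newton step for a twice continuously
differentiable objective `F` with `L`-Lipschitz Hessian (in spectral norm, stated pointwise). -/
theorem ssn_local_convergence {d : ℕ}
    (F : EuclideanSpace ℝ (Fin d) → ℝ) (hF : ContDiff ℝ 2 F)
    (wstar : EuclideanSpace ℝ (Fin d)) (hmin : ∀ w, F wstar ≤ F w)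
    (L : ℝ)
    (Hess : EuclideanSpace ℝ (Fin d) → Matrix (Fin d) (Fin d) ℝ)
    (hHess : ∀ w y, fderiv ℝ (gradient F) w y = Matrix.toEuclideanLin (Hess w) y)
    (hLip : ∀ w w' x, ‖Matrix.toEuclideanLin (Hess w - Hess w') x‖ ≤ L * ‖w - w'‖ * ‖x‖)
    (wt : EuclideanSpace ℝ (Fin d)) (hHt : (Hess wt).PosDef)
    (ε : ℝ) (hε : 0 < ε ∧ ε < 1 / 4)
    (Htil : Matrix (Fin d) (Fin d) ℝ) (hHtil : Htil.PosDef)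
    (happrox : (Htil - (1 - ε) • Hess wt).PosSemidef ∧ ((1 + ε) • Hess wt - Htil).PosSemidef)
    (wnext : EuclideanSpace ℝ (Fin d))
    (hupdate : wnext = wt - Matrix.toEuclideanLin Htil⁻¹ (gradient F wt)) :
    ‖wnext - wstar‖ ≤
      Real.sqrt 2 * ε * Real.sqrt (sMax hHt.1 / sMin hHt.1) * ‖wt - wstar‖
        + (L / sMin hHt.1) * ‖wt - wstar‖ ^ 2 := by
  obtain ⟨hε0, hε⟩ := hε
  rcases isEmpty_or_nonempty (Fin d) with hd | hd
  · simp [Subsingleton.elim (wnext - wstar) 0, Subsingleton.elim (wt - wstar) 0]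
  have hgrad_min : gradient F wstar = 0 := by
    rw [gradient, IsLocalMin.fderiv_eq_zero (.of_forall hmin), map_zero]
  have htaylor := norm_sub_sub_fderiv_apply_le (fun w => (hF.differentiable_gradient w).hasFDerivAt)
    (fun w w' v => by rw [hHess, hHess, ← LinearMap.sub_apply, ← map_sub]; exact hLip w w' v)
    wt wstar
  rw [hgrad_min, sub_zero, hHess] at htaylor
  have hstep := norm_sub_apply_le_of_spectral_approx (G := toEuclideanLin Htil⁻¹)
    (isSymmetric_toEuclideanLin_iff.mpr hHt.1) (isSymmetric_toEuclideanLin_iff.mpr hHtil.1)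
    (sMin_pos hHt) (sMin_mul_norm_sq_le_inner hHt.1) (inner_le_sMax_mul_norm_sq hHt.1)
    hε0.le (by linarith)
    (fun x => by simpa [real_inner_smul_right] using happrox.1.inner_toEuclideanLin_le x)
    (fun x => by simpa [real_inner_smul_right] using happrox.2.inner_toEuclideanLin_le x)
    (fun x => by simp [toLpLin_apply, mulVec_mulVec,
      mul_nonsing_inv _ ((isUnit_iff_isUnit_det _).mp hHtil.isUnit)])
    (wt - wstar) (gradient F wt)
  rw [hupdate, sub_right_comm]
  refine hstep.trans (add_le_add ?_ ?_)
  · gcongr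
    exact div_one_sub_le_sqrt_two_mul hε0.le hε.le
  · rw [div_mul_eq_mul_div]
    exact div_one_sub_mul_le_div (by linarith) (sMin_pos hHt) (norm_nonneg _)
      (by linarith)
end
end

section
/- Let H be a d×d symmetric positive definite real matrix, g ∈ ℝ^d, and ε ∈ (0, 1). Suppose H̃_1, …, H̃_m are symmetric positive definite matrices with (1−ε)H ⪯ H̃_i ⪯ (1+ε)H for every i ∈ [m] and (1/m)·Σ_{i=1}^m H̃_i = H. Define φ(p) = pᵀHp − 2pᵀg and p̃ = (1/m)·Σ_{i=1}^m H̃_i⁻¹g. Then min_p φ(p) ≤ φ(p̃) ≤ (1 − α²)·min_p φ(p), where α = ε²/(1−ε). -/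
/-!
Put `p* = H⁻¹ g`, so that `φ p = ‖p - p*‖²_H - ‖p*‖²_H`, and `Δᵢ = H - H̃ᵢ`. To second order,
`H̃ᵢ⁻¹ = H⁻¹ + H⁻¹ Δᵢ H⁻¹ + H̃ᵢ⁻¹ Δᵢ H⁻¹ Δᵢ H⁻¹`, and the first-order terms cancel in the average
since `∑ᵢ Δᵢ = 0`. So `p̃ - p*` is the average of `H̃ᵢ⁻¹ Δᵢ H⁻¹ Δᵢ p*`. For `‖·‖_H` the maps
`H⁻¹ Δᵢ` have norm at most `ε` (as `-ε H ⪯ Δᵢ ⪯ ε H`) and `H̃ᵢ⁻¹ H` has norm at most `1 / (1 - ε)`,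
so each term has `H`-norm at most `α ‖p*‖_H`, and by convexity of `‖·‖²_H` so does the average.
-/

open Matrix

noncomputable section

namespace Matrix

variable {n : Type*} [Fintype n]

lemma IsHermitian.dotProduct_mulVec_comm {A : Matrix n n ℝ} (hA : A.IsHermitian) (x y : n → ℝ) :
    x ⬝ᵥ (A *ᵥ y) = y ⬝ᵥ (A *ᵥ x) := by
  rw [dotProduct_mulVec, ← mulVec_transpose, ← conjTranspose_eq_transpose_of_trivial, hA.eq,
    dotProduct_comm]

lemma PosSemidef.dotProduct_mulVec_self_nonneg {A : Matrix n n ℝ} (hA : A.PosSemidef)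
    (x : n → ℝ) : 0 ≤ x ⬝ᵥ (A *ᵥ x) := by
  simpa using hA.dotProduct_mulVec_nonneg x

lemma sq_dotProduct_mulVec_le_of_posSemidef {A S : Matrix n n ℝ} (hS : S.IsHermitian) {ε : ℝ}
    (hle : (ε • A - S).PosSemidef) (hge : (ε • A + S).PosSemidef) (x y : n → ℝ) :
    (x ⬝ᵥ (S *ᵥ y)) ^ 2 ≤ ε ^ 2 * (x ⬝ᵥ (A *ᵥ x)) * (y ⬝ᵥ (A *ᵥ y)) := by
  -- The sum of the two nonnegative forms at `x + t y` and `x - t y` is a quadratic in `t`.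
  have hquad : ∀ t : ℝ, 0 ≤ ε * (y ⬝ᵥ (A *ᵥ y)) * (t * t) + -2 * (x ⬝ᵥ (S *ᵥ y)) * t
      + ε * (x ⬝ᵥ (A *ᵥ x)) := by
    intro t
    have h₁ := hle.dotProduct_mulVec_self_nonneg (x + t • y)
    have h₂ := hge.dotProduct_mulVec_self_nonneg (x - t • y)
    have hSxy := hS.dotProduct_mulVec_comm x y
    simp only [sub_mulVec, add_mulVec, smul_mulVec, mulVec_add, mulVec_sub, mulVec_smul,
      dotProduct_add, dotProduct_sub, add_dotProduct, sub_dotProduct, dotProduct_smul,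
      smul_dotProduct, smul_eq_mul] at h₁ h₂
    rw [← hSxy] at h₁ h₂
    linarith
  have := discrim_le_zero hquad
  rw [discrim] at this
  linarith

lemma PosSemidef.sq_dotProduct_mulVec_le {A : Matrix n n ℝ} (hA : A.PosSemidef) (x y : n → ℝ) :
    (x ⬝ᵥ (A *ᵥ y)) ^ 2 ≤ (x ⬝ᵥ (A *ᵥ x)) * (y ⬝ᵥ (A *ᵥ y)) := by
  simpa using sq_dotProduct_mulVec_le_of_posSemidef (ε := 1) hA.1 (by simpa using .zero)
    (by simpa [← two_smul ℝ A] using hA.smul zero_le_two) x y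

lemma dotProduct_mulVec_le_of_mulVec_eq {A S : Matrix n n ℝ} (hA : A.PosSemidef)
    (hS : S.IsHermitian) {ε : ℝ} (hle : (ε • A - S).PosSemidef) (hge : (ε • A + S).PosSemidef)
    {v z : n → ℝ} (hz : A *ᵥ z = S *ᵥ v) :
    z ⬝ᵥ (A *ᵥ z) ≤ ε ^ 2 * (v ⬝ᵥ (A *ᵥ v)) := by
  have h := sq_dotProduct_mulVec_le_of_posSemidef hS hle hge z v
  rw [← hz] at h
  have hz₀ := hA.dotProduct_mulVec_self_nonneg z
  have hv₀ := hA.dotProduct_mulVec_self_nonneg v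
  nlinarith [mul_nonneg (sq_nonneg ε) hv₀]

lemma sq_mul_dotProduct_mulVec_le_of_mulVec_eq {A B : Matrix n n ℝ} (hA : A.PosSemidef) {c : ℝ}
    (hc : 0 ≤ c) (hlow : (B - c • A).PosSemidef) {v z : n → ℝ} (hz : B *ᵥ z = A *ᵥ v) :
    c ^ 2 * (z ⬝ᵥ (A *ᵥ z)) ≤ v ⬝ᵥ (A *ᵥ v) := by
  have hz₀ := hA.dotProduct_mulVec_self_nonneg z
  have hv₀ := hA.dotProduct_mulVec_self_nonneg v
  have hcz : c * (z ⬝ᵥ (A *ᵥ z)) ≤ z ⬝ᵥ (A *ᵥ v) := by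
    have := hlow.dotProduct_mulVec_self_nonneg z
    rwa [sub_mulVec, dotProduct_sub, hz, smul_mulVec, dotProduct_smul, smul_eq_mul,
      sub_nonneg] at this
  have hsq : (c * (z ⬝ᵥ (A *ᵥ z))) ^ 2 ≤ (z ⬝ᵥ (A *ᵥ z)) * (v ⬝ᵥ (A *ᵥ v)) :=
    (pow_le_pow_left₀ (mul_nonneg hc hz₀) hcz 2).trans (hA.sq_dotProduct_mulVec_le z v)
  nlinarith

lemma convexOn_dotProduct_mulVec {A : Matrix n n ℝ} (hA : A.PosSemidef) :
    ConvexOn ℝ Set.univ fun x => x ⬝ᵥ (A *ᵥ x) := by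
  refine ⟨convex_univ, fun x _ y _ a b ha hb hab => ?_⟩
  have hxy := hA.dotProduct_mulVec_self_nonneg (x - y)
  have hsymm := hA.1.dotProduct_mulVec_comm x y
  simp only [smul_eq_mul, mulVec_add, mulVec_smul, mulVec_sub, dotProduct_add, add_dotProduct,
    dotProduct_smul, smul_dotProduct, dotProduct_sub, sub_dotProduct] at hxy ⊢
  rw [← hsymm] at hxy ⊢
  obtain rfl : b = 1 - a := by linarith
  nlinarith [mul_nonneg (mul_nonneg ha hb) hxy]

variable [DecidableEq n]

lemma mulVec_inv_mulVec {A : Matrix n n ℝ} (hA : IsUnit A.det) (x : n → ℝ) :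
    A *ᵥ (A⁻¹ *ᵥ x) = x := by
  rw [mulVec_mulVec, mul_nonsing_inv A hA, one_mulVec]

lemma dotProduct_mulVec_sub_two_mul_dotProduct {A : Matrix n n ℝ} (hA : A.IsHermitian)
    (hdet : IsUnit A.det) (g p : n → ℝ) :
    p ⬝ᵥ (A *ᵥ p) - 2 * (p ⬝ᵥ g) =
      (p - A⁻¹ *ᵥ g) ⬝ᵥ (A *ᵥ (p - A⁻¹ *ᵥ g)) - (A⁻¹ *ᵥ g) ⬝ᵥ (A *ᵥ (A⁻¹ *ᵥ g)) := by
  have hsymm := hA.dotProduct_mulVec_comm p (A⁻¹ *ᵥ g)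
  rw [mulVec_inv_mulVec hdet] at hsymm ⊢
  simp only [mulVec_sub, dotProduct_sub, sub_dotProduct, mulVec_inv_mulVec hdet, hsymm]
  ring

def invRemainder (A B : Matrix n n ℝ) : Matrix n n ℝ :=
  B⁻¹ * (A - B) * A⁻¹ * (A - B) * A⁻¹

lemma inv_eq_add_invRemainder {A B : Matrix n n ℝ} (hA : IsUnit A.det) (hB : IsUnit B.det) :
    B⁻¹ = A⁻¹ + A⁻¹ * (A - B) * A⁻¹ + invRemainder A B := by
  have hfirst : B⁻¹ * (A - B) * A⁻¹ = B⁻¹ - A⁻¹ := by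
    rw [Matrix.mul_sub, Matrix.sub_mul, nonsing_inv_mul B hB, Matrix.one_mul, Matrix.mul_assoc,
      mul_nonsing_inv A hA, Matrix.mul_one]
  rw [invRemainder, hfirst, Matrix.sub_mul, Matrix.sub_mul, hfirst]
  abel

lemma sum_smul_inv_sub_inv {ι : Type*} [Fintype ι] {A : Matrix n n ℝ} {B : ι → Matrix n n ℝ}
    (hA : IsUnit A.det) (hB : ∀ i, IsUnit (B i).det) {c : ι → ℝ} (hc : ∑ i, c i = 1)
    (havg : ∑ i, c i • B i = A) :
    ∑ i, c i • (B i)⁻¹ - A⁻¹ = ∑ i, c i • invRemainder A (B i) := by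
  have hfirst : ∑ i, c i • (A⁻¹ * (A - B i) * A⁻¹) = 0 := by
    have hdev : ∑ i, c i • (A - B i) = 0 := by
      simp_rw [smul_sub, Finset.sum_sub_distrib, ← Finset.sum_smul, hc, one_smul, havg, sub_self]
    calc ∑ i, c i • (A⁻¹ * (A - B i) * A⁻¹) = A⁻¹ * (∑ i, c i • (A - B i)) * A⁻¹ := by
          simp only [Finset.mul_sum, Finset.sum_mul, Matrix.mul_smul, Matrix.smul_mul]
      _ = 0 := by rw [hdev, Matrix.mul_zero, Matrix.zero_mul]
  simp_rw [fun i => inv_eq_add_invRemainder hA (hB i), smul_add, Finset.sum_add_distrib,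
    ← Finset.sum_smul, hc, one_smul, hfirst]
  abel

lemma dotProduct_mulVec_invRemainder_le {A B : Matrix n n ℝ} (hA : A.PosDef) (hB : B.PosDef)
    {ε : ℝ} (hε : ε < 1) (hlow : (B - (1 - ε) • A).PosSemidef)
    (hup : ((1 + ε) • A - B).PosSemidef) (g : n → ℝ) :
    (invRemainder A B *ᵥ g) ⬝ᵥ (A *ᵥ (invRemainder A B *ᵥ g)) ≤
      (ε ^ 2 / (1 - ε)) ^ 2 * ((A⁻¹ *ᵥ g) ⬝ᵥ (A *ᵥ (A⁻¹ *ᵥ g))) := by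
  have hAdet := (isUnit_iff_isUnit_det A).mp hA.isUnit
  have hBdet := (isUnit_iff_isUnit_det B).mp hB.isUnit
  have hS : (A - B).IsHermitian := hA.1.sub hB.1
  have hle : (ε • A - (A - B)).PosSemidef := by convert hlow using 1; module
  have hge : (ε • A + (A - B)).PosSemidef := by convert hup using 1; module
  set v := A⁻¹ *ᵥ g
  set y₁ := A⁻¹ *ᵥ ((A - B) *ᵥ v)
  set y₂ := A⁻¹ *ᵥ ((A - B) *ᵥ y₁)
  set w := B⁻¹ *ᵥ (A *ᵥ y₂)
  have hw : invRemainder A B *ᵥ g = w := by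
    simp only [w, y₂, y₁, v, invRemainder, mulVec_inv_mulVec hAdet, ← mulVec_mulVec]
  have h₁ : y₁ ⬝ᵥ (A *ᵥ y₁) ≤ ε ^ 2 * (v ⬝ᵥ (A *ᵥ v)) :=
    dotProduct_mulVec_le_of_mulVec_eq hA.posSemidef hS hle hge (mulVec_inv_mulVec hAdet _)
  have h₂ : y₂ ⬝ᵥ (A *ᵥ y₂) ≤ ε ^ 2 * (y₁ ⬝ᵥ (A *ᵥ y₁)) :=
    dotProduct_mulVec_le_of_mulVec_eq hA.posSemidef hS hle hge (mulVec_inv_mulVec hAdet _)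
  have h₃ : (1 - ε) ^ 2 * (w ⬝ᵥ (A *ᵥ w)) ≤ y₂ ⬝ᵥ (A *ᵥ y₂) :=
    sq_mul_dotProduct_mulVec_le_of_mulVec_eq hA.posSemidef (by linarith) hlow
      (mulVec_inv_mulVec hBdet _)
  rw [hw, div_pow, div_mul_eq_mul_div, le_div_iff₀ (by nlinarith)]
  nlinarith [mul_le_mul_of_nonneg_left h₁ (sq_nonneg ε)]

end Matrix

/-- the Model Average lemma for GIANT. Averaging the `m` local approximate
Newton directions `H̃_i⁻¹g` yields a direction that minimizes the auxiliary quadratic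
`φ(p) = pᵀHp − 2pᵀg` within factor `1 − α²` with `α = ε²/(1−ε)`. -/
theorem giant_model_average {d m : ℕ}
    (H : Matrix (Fin d) (Fin d) ℝ) (hH : H.PosDef)
    (g : Fin d → ℝ) (ε : ℝ) (hε : 0 < ε ∧ ε < 1)
    (Htil : Fin m → Matrix (Fin d) (Fin d) ℝ)
    (hHtilPD : ∀ i, (Htil i).PosDef)
    (happrox : ∀ i,
      (Htil i - (1 - ε) • H).PosSemidef ∧ ((1 + ε) • H - Htil i).PosSemidef)
    (havg : ((1 : ℝ) / m) • ∑ i, Htil i = H) :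
    let φ : (Fin d → ℝ) → ℝ := fun p => p ⬝ᵥ (H *ᵥ p) - 2 * (p ⬝ᵥ g)
    let pstar : Fin d → ℝ := H⁻¹ *ᵥ g
    let ptil : Fin d → ℝ := ((1 : ℝ) / m) • ∑ i, (Htil i)⁻¹ *ᵥ g
    let α : ℝ := ε ^ 2 / (1 - ε)
    (∀ p, φ pstar ≤ φ p) ∧ φ pstar ≤ φ ptil ∧ φ ptil ≤ (1 - α ^ 2) * φ pstar := by
  intro φ pstar ptil α
  have hdet := (isUnit_iff_isUnit_det H).mp hH.isUnit
  have hφ : ∀ p, φ p = (p - pstar) ⬝ᵥ (H *ᵥ (p - pstar)) - pstar ⬝ᵥ (H *ᵥ pstar) :=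
    dotProduct_mulVec_sub_two_mul_dotProduct hH.1 hdet g
  have hmin : ∀ p, φ pstar ≤ φ p := fun p => by
    simpa [hφ] using hH.posSemidef.dotProduct_mulVec_self_nonneg (p - pstar)
  refine ⟨hmin, hmin ptil, ?_⟩
  suffices (ptil - pstar) ⬝ᵥ (H *ᵥ (ptil - pstar)) ≤ α ^ 2 * (pstar ⬝ᵥ (H *ᵥ pstar)) by
    rw [hφ, hφ, sub_self, mulVec_zero, dotProduct_zero]
    linarith
  -- For `m = 0`, `havg` reads `H = 0` since `1 / 0 = 0`, and every quantity vanishes.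
  rcases Nat.eq_zero_or_pos m with rfl | hm
  · obtain rfl : H = 0 := by simpa using havg.symm
    simp
  have hc : ∑ _ : Fin m, (1 / m : ℝ) = 1 := by simp [hm.ne']
  have hptil : ptil - pstar = ∑ i, (1 / m : ℝ) • (invRemainder H (Htil i) *ᵥ g) := by
    have := sum_smul_inv_sub_inv hdet (fun i => (isUnit_iff_isUnit_det _).mp (hHtilPD i).isUnit)
      hc (by rw [← Finset.smul_sum, havg])
    simp only [ptil, pstar, Finset.smul_sum, ← smul_mulVec, ← sum_mulVec, ← sub_mulVec, this]
  rw [hptil]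
  calc _ ≤ ∑ i : Fin m, (1 / m : ℝ) •
          ((invRemainder H (Htil i) *ᵥ g) ⬝ᵥ (H *ᵥ (invRemainder H (Htil i) *ᵥ g))) :=
        (convexOn_dotProduct_mulVec hH.posSemidef).map_sum_le (fun _ _ => by positivity) hc
          (fun _ _ => Set.mem_univ _)
    _ ≤ ∑ _ : Fin m, (1 / m : ℝ) • (α ^ 2 * (pstar ⬝ᵥ (H *ᵥ pstar))) := by
        gcongr with i
        exact dotProduct_mulVec_invRemainder_le hH (hHtilPD i) hε.2 (happrox i).1 (happrox i).2 g
    _ = α ^ 2 * (pstar ⬝ᵥ (H *ᵥ pstar)) := by rw [← Finset.sum_smul, hc, one_smul]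
end
end
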